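/- Left outer joins of a shared relation with independent non-shared relations can be reordered without changing the result: for S : Set ρ, T₁ : Set (κ × β₁) and T₂ : Set (κ × β₂), and with the key of an extended row (s, o) defined as key s, one has ((s, o₁), o₂) ∈ OJ (OJ S T₁) T₂ if and only if ((s, o₂), o₁) ∈ OJ (OJ S T₂) T₁. -/

import Mathlib

/-- Left outer join of `X : Set ρ` with `T : Set (κ × β)`, joining on `key`. -/
def OJ {ρ κ β : Type*} (key : ρ → κ) (X : Set ρ) (T : Set (κ × β)) :
    Set (ρ × Option β) :=
  {p : ρ × Option β |
    (∃ x b, p = (x, some b) ∧ x ∈ X ∧ (key x, b) ∈ T) ∨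
    (∃ x, p = (x, (none : Option β)) ∧ x ∈ X ∧ ∀ b, (key x, b) ∉ T)}

def OuterMatch {κ β : Type*} (T : Set (κ × β)) (k : κ) (o : Option β) : Prop :=
  (∃ b, o = some b ∧ (k, b) ∈ T) ∨ (o = none ∧ ∀ b, (k, b) ∉ T)

lemma mem_OJ_iff {ρ κ β : Type*} (key : ρ → κ) (X : Set ρ) (T : Set (κ × β))
    (x : ρ) (o : Option β) :
    (x, o) ∈ OJ key X T ↔ x ∈ X ∧ OuterMatch T (key x) o := by
  constructor
  · rintro (⟨y, b, h, hy, hT⟩ | ⟨y, h, hy, hT⟩) <;> obtain ⟨rfl, rfl⟩ := Prod.mk.inj h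
    · exact ⟨hy, .inl ⟨b, rfl, hT⟩⟩
    · exact ⟨hy, .inr ⟨rfl, hT⟩⟩
  · rintro ⟨hx, ⟨b, rfl, hT⟩ | ⟨rfl, hT⟩⟩
    · exact .inl ⟨x, b, rfl, hx, hT⟩
    · exact .inr ⟨x, rfl, hx, hT⟩

/-- Left outer joins of a shared relation with independent non-shared relations
can be reordered without changing the result. -/
theorem oj_oj_comm {ρ κ β₁ β₂ : Type*} (key : ρ → κ)
    (S : Set ρ) (T₁ : Set (κ × β₁)) (T₂ : Set (κ × β₂))
    (s : ρ) (o₁ : Option β₁) (o₂ : Option β₂) :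
    ((s, o₁), o₂) ∈ OJ (fun p : ρ × Option β₁ => key p.1) (OJ key S T₁) T₂ ↔
      ((s, o₂), o₁) ∈ OJ (fun p : ρ × Option β₂ => key p.1) (OJ key S T₂) T₁ := by
  -- The outer join keys `(s, o)` by `key s`, so both sides say that `s ∈ S` and that
  -- `o₁`, `o₂` match `key s` in `T₁`, `T₂` independently.
  simp only [mem_OJ_iff]
  exact and_right_comm
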